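/- arXiv:1909.11312 — 2 statements merged into one kernel-verified Lean document; each statement's English description precedes it below -/
import Mathlib

section
/- Suppose R is a Rota–Baxter operator of weight λ on L. Then r is a solution of the classical Yang–Baxter equation on L if and only if for all a, b ∈ L: R([R(a), b] + [R*(a), b] + λ[a, b]) = 0. -/
/-!
Since ω is nondegenerate and L is finite-dimensional, contracting the last two legs of
L ⊗ L ⊗ L against ω identifies it with the linear maps L ⊗ L → L. By invariance of ω, the three
terms of the CYBE for r contract against x ⊗ y to [R x, R y], R[x, R y] and R[R* x, y], so r
solves the CYBE iff [R x, R y] - R[x, R y] + R[R* x, y] = 0 for all x, y. The Rota–Baxter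
identity turns [R x, R y] - R[x, R y] into R([R x, y] + λ[x, y]).
-/

open TensorProduct

namespace LinearMap.BilinForm

variable {F L : Type*} [Field F] [AddCommGroup L] [Module F L] [FiniteDimensional F L]

noncomputable def contractTail (ω : LinearMap.BilinForm F L) (hω : ω.Nondegenerate) :
    L ⊗[F] (L ⊗[F] L) ≃ₗ[F] (L ⊗[F] L →ₗ[F] L) :=
  (TensorProduct.comm F L (L ⊗[F] L)).trans <|
    (TensorProduct.congr
      ((TensorProduct.congr (ω.toDual hω) (ω.toDual hω)).trans
        (TensorProduct.dualDistribEquiv F L L)) (LinearEquiv.refl F L)).trans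
      (dualTensorHomEquiv F (L ⊗[F] L) L)

@[simp]
theorem contractTail_tmul (ω : LinearMap.BilinForm F L) (hω : ω.Nondegenerate) (u v w x y : L) :
    ω.contractTail hω (u ⊗ₜ (v ⊗ₜ w)) (x ⊗ₜ y) = (ω v x * ω w y) • u := by
  simp [contractTail, TensorProduct.dualDistribEquiv, toDual_def]

end LinearMap.BilinForm

theorem adjoint_apply_eq_sum {F L ι : Type*} [CommRing F] [AddCommGroup L] [Module F L]
    [Fintype ι] {ω : LinearMap.BilinForm F L} (hω : ω.SeparatingRight)
    (hsymm : ∀ x y : L, ω x y = ω y x) {a b : ι → L} {R Rstar : L →ₗ[F] L}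
    (hR : ∀ x : L, R x = ∑ i, ω (b i) x • a i) (hadj : ∀ x y : L, ω (R x) y = ω x (Rstar y))
    (y : L) : Rstar y = ∑ i, ω (a i) y • b i := by
  refine sub_eq_zero.mp <| hω _ fun x => ?_
  rw [map_sub, sub_eq_zero, ← hadj, hR, map_sum, LinearMap.sum_apply, map_sum]
  refine Finset.sum_congr rfl fun i _ => ?_
  rw [map_smul, map_smul, LinearMap.smul_apply, smul_eq_mul, smul_eq_mul, hsymm (b i), mul_comm]

def cybeTensor (F : Type*) {L ι : Type*} [CommRing F] [LieRing L] [LieAlgebra F L] [Fintype ι]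
    (a b : ι → L) : L ⊗[F] (L ⊗[F] L) :=
  ∑ i, ∑ j, (⁅a i, a j⁆ ⊗ₜ[F] (b i ⊗ₜ[F] b j) - a i ⊗ₜ[F] (⁅a j, b i⁆ ⊗ₜ[F] b j)
    + a i ⊗ₜ[F] (a j ⊗ₜ[F] ⁅b i, b j⁆))

section

variable {F L ι : Type*} [CommRing F] [LieRing L] [LieAlgebra F L] [Fintype ι]
  {ω : LinearMap.BilinForm F L} {a b : ι → L} {R Rstar : L →ₗ[F] L}

theorem sum_sum_smul_lie_eq_lie (hR : ∀ x : L, R x = ∑ i, ω (b i) x • a i) (x y : L) :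
    ∑ i, ∑ j, (ω (b i) x * ω (b j) y) • ⁅a i, a j⁆ = ⁅R x, R y⁆ := by
  rw [hR x, hR y, sum_lie]
  refine Finset.sum_congr rfl fun i _ => ?_
  rw [lie_sum]
  refine Finset.sum_congr rfl fun j _ => ?_
  rw [smul_lie, lie_smul, smul_smul]

theorem sum_sum_smul_eq_apply_lie_apply (hsymm : ∀ x y : L, ω x y = ω y x)
    (hinv : ∀ x y z : L, ω ⁅x, y⁆ z = ω x ⁅y, z⁆) (hR : ∀ x : L, R x = ∑ i, ω (b i) x • a i)
    (x y : L) : ∑ i, ∑ j, (ω ⁅a j, b i⁆ x * ω (b j) y) • a i = R ⁅x, R y⁆ := by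
  rw [hR ⁅x, R y⁆]
  refine Finset.sum_congr rfl fun i _ => ?_
  have : ω (b i) ⁅x, R y⁆ = ∑ j, ω ⁅a j, b i⁆ x * ω (b j) y := by
    rw [← hinv, hsymm, hR y, map_sum, LinearMap.sum_apply]
    refine Finset.sum_congr rfl fun j _ => ?_
    rw [map_smul, LinearMap.smul_apply, smul_eq_mul, hinv, mul_comm]
  rw [this, Finset.sum_smul]

theorem sum_sum_smul_eq_apply_lie_adjoint (hinv : ∀ x y z : L, ω ⁅x, y⁆ z = ω x ⁅y, z⁆)
    (hR : ∀ x : L, R x = ∑ i, ω (b i) x • a i) (hRstar : ∀ x : L, Rstar x = ∑ i, ω (a i) x • b i)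
    (x y : L) : ∑ i, ∑ j, (ω (a j) x * ω ⁅b i, b j⁆ y) • a i = R ⁅Rstar x, y⁆ := by
  rw [hR ⁅Rstar x, y⁆]
  refine Finset.sum_congr rfl fun i _ => ?_
  have : ω (b i) ⁅Rstar x, y⁆ = ∑ j, ω (a j) x * ω ⁅b i, b j⁆ y := by
    rw [hRstar, sum_lie, map_sum]
    refine Finset.sum_congr rfl fun j _ => ?_
    rw [smul_lie, map_smul, smul_eq_mul, hinv]
  rw [this, Finset.sum_smul]

end

section

variable {F L ι : Type*} [Field F] [LieRing L] [LieAlgebra F L] [FiniteDimensional F L] [Fintype ι]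
  {ω : LinearMap.BilinForm F L} {a b : ι → L} {R Rstar : L →ₗ[F] L}

theorem contractTail_cybeTensor_tmul (hω : ω.Nondegenerate) (hsymm : ∀ x y : L, ω x y = ω y x)
    (hinv : ∀ x y z : L, ω ⁅x, y⁆ z = ω x ⁅y, z⁆) (hR : ∀ x : L, R x = ∑ i, ω (b i) x • a i)
    (hadj : ∀ x y : L, ω (R x) y = ω x (Rstar y)) (x y : L) :
    ω.contractTail hω (cybeTensor F a b) (x ⊗ₜ y) = ⁅R x, R y⁆ - R ⁅x, R y⁆ + R ⁅Rstar x, y⁆ := by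
  have hRstar := adjoint_apply_eq_sum hω.2 hsymm hR hadj
  simp only [cybeTensor, map_sum, map_add, map_sub, LinearMap.sum_apply, LinearMap.add_apply,
    LinearMap.sub_apply, LinearMap.BilinForm.contractTail_tmul, Finset.sum_add_distrib,
    Finset.sum_sub_distrib]
  rw [sum_sum_smul_lie_eq_lie hR, sum_sum_smul_eq_apply_lie_apply hsymm hinv hR,
    sum_sum_smul_eq_apply_lie_adjoint hinv hR hRstar]

theorem cybeTensor_eq_zero_iff (hω : ω.Nondegenerate) (hsymm : ∀ x y : L, ω x y = ω y x)
    (hinv : ∀ x y z : L, ω ⁅x, y⁆ z = ω x ⁅y, z⁆) (hR : ∀ x : L, R x = ∑ i, ω (b i) x • a i)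
    (hadj : ∀ x y : L, ω (R x) y = ω x (Rstar y)) :
    cybeTensor F a b = 0 ↔ ∀ x y : L, ⁅R x, R y⁆ - R ⁅x, R y⁆ + R ⁅Rstar x, y⁆ = 0 := by
  simp only [← contractTail_cybeTensor_tmul hω hsymm hinv hR hadj]
  rw [← (ω.contractTail hω).map_eq_zero_iff]
  exact ⟨fun h x y => by rw [h, LinearMap.zero_apply], fun h => TensorProduct.ext' h⟩

end

theorem stmt_4_general
    (F : Type*) [Field F]
    (L : Type*) [LieRing L] [LieAlgebra F L] [FiniteDimensional F L]
    (ω : LinearMap.BilinForm F L)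
    (hnd : ω.Nondegenerate)
    (hsymm : ∀ x y : L, ω x y = ω y x)
    (hinv : ∀ x y z : L, ω ⁅x, y⁆ z = ω x ⁅y, z⁆)
    (ι : Type*) [Fintype ι] (a b : ι → L)
    (R Rstar : L →ₗ[F] L)
    (hR : ∀ x : L, R x = ∑ i, ω (b i) x • a i)
    (hadj : ∀ x y : L, ω (R x) y = ω x (Rstar y))
    (lam : F)
    (hRB : ∀ x y : L, ⁅R x, R y⁆ = R (⁅R x, y⁆ + ⁅x, R y⁆ + lam • ⁅x, y⁆)) :
    (∑ i, ∑ j, (⁅a i, a j⁆ ⊗ₜ[F] (b i ⊗ₜ[F] b j)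
        - a i ⊗ₜ[F] (⁅a j, b i⁆ ⊗ₜ[F] b j)
        + a i ⊗ₜ[F] (a j ⊗ₜ[F] ⁅b i, b j⁆)) = (0 : L ⊗[F] (L ⊗[F] L)))
      ↔ (∀ x y : L, R (⁅R x, y⁆ + ⁅Rstar x, y⁆ + lam • ⁅x, y⁆) = 0) := by
  refine (cybeTensor_eq_zero_iff hnd hsymm hinv hR hadj).trans <| forall₂_congr fun x y => ?_
  have : ⁅R x, R y⁆ - R ⁅x, R y⁆ + R ⁅Rstar x, y⁆ = R (⁅R x, y⁆ + ⁅Rstar x, y⁆ + lam • ⁅x, y⁆) := by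
    rw [hRB]
    simp only [map_add]
    abel
  rw [this]

theorem stmt_4
    (F : Type*) [Field F] [CharZero F]
    (L : Type*) [LieRing L] [LieAlgebra F L] [FiniteDimensional F L]
    (ω : LinearMap.BilinForm F L)
    (hnd : ω.Nondegenerate)
    (hsymm : ∀ x y : L, ω x y = ω y x)
    (hinv : ∀ x y z : L, ω ⁅x, y⁆ z = ω x ⁅y, z⁆)
    (ι : Type*) [Fintype ι] (a b : ι → L)
    (R Rstar : L →ₗ[F] L)
    (hR : ∀ x : L, R x = ∑ i, ω (b i) x • a i)
    (hadj : ∀ x y : L, ω (R x) y = ω x (Rstar y))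
    (lam : F)
    (hRB : ∀ x y : L, ⁅R x, R y⁆ = R (⁅R x, y⁆ + ⁅x, R y⁆ + lam • ⁅x, y⁆)) :
    (∑ i, ∑ j, (⁅a i, a j⁆ ⊗ₜ[F] (b i ⊗ₜ[F] b j)
        - a i ⊗ₜ[F] (⁅a j, b i⁆ ⊗ₜ[F] b j)
        + a i ⊗ₜ[F] (a j ⊗ₜ[F] ⁅b i, b j⁆)) = (0 : L ⊗[F] (L ⊗[F] L)))
      ↔ (∀ x y : L, R (⁅R x, y⁆ + ⁅Rstar x, y⁆ + lam • ⁅x, y⁆) = 0) :=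
  stmt_4_general F L ω hnd hsymm hinv ι a b R Rstar hR hadj lam hRB
end

section
/- Suppose r is a solution of the classical Yang–Baxter equation on L, r + τ(r) is L-invariant, and the ideal I_λ = θ_λ([L, L]) satisfies R(I_λ) ⊆ I_λ. Then also R*(I_λ) ⊆ I_λ. -/
/-!
The invariance of `r + τ(r)` says exactly that `R + R*` commutes with every `ad y`, so
`θ_λ = R + R* + λ` is an `L`-module endomorphism of `L` and maps `[L, L]` into itself.
Hence `θ_λ` maps `I_λ ⊆ [L, L]` into `I_λ`, and `R* = θ_λ - R - λ` preserves `I_λ` as soon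
as `R` does.
-/

open TensorProduct

namespace LinearMap.BilinForm

variable {K M ι : Type*} [CommRing K] [AddCommGroup M] [Module K M] [Fintype ι]

theorem adjoint_apply_eq_sum {ω : LinearMap.BilinForm K M} (hω : ω.Nondegenerate)
    (hsymm : ∀ x y, ω x y = ω y x) {a b : ι → M} {R S : M →ₗ[K] M}
    (hR : ∀ x, R x = ∑ i, ω (b i) x • a i) (hadj : ∀ x y, ω (R x) y = ω x (S y))
    (x : M) :
    S x = ∑ i, ω (a i) x • b i := by
  refine sub_eq_zero.mp (hω.2 _ fun z => ?_)
  rw [map_sub, sub_eq_zero, ← hadj, hR, map_sum, map_sum, LinearMap.sum_apply]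
  simp only [map_smul, LinearMap.smul_apply, smul_eq_mul, hsymm z, mul_comm]

end LinearMap.BilinForm

section Lie

variable {K L M ι : Type*} [CommRing K] [LieRing L] [LieAlgebra K L] [Fintype ι]

/-- Contracting with `u ⊗ v ↦ ω(v, x) u` turns the invariance of `r + τ(r)` into this
identity. -/
theorem add_apply_lie_of_invariant {ω : LinearMap.BilinForm K L}
    (hinv : ∀ x y z : L, ω ⁅x, y⁆ z = ω x ⁅y, z⁆) {a b : ι → L} {R S : L →ₗ[K] L}
    (hR : ∀ x, R x = ∑ i, ω (b i) x • a i) (hS : ∀ x, S x = ∑ i, ω (a i) x • b i)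
    (hinvr : ∀ y : L, ∑ i, (⁅a i, y⁆ ⊗ₜ[K] b i + a i ⊗ₜ[K] ⁅b i, y⁆
        + ⁅b i, y⁆ ⊗ₜ[K] a i + b i ⊗ₜ[K] ⁅a i, y⁆) = (0 : L ⊗[K] L))
    (x y : L) : (R + S) ⁅y, x⁆ = ⁅y, (R + S) x⁆ := by
  have h := congrArg ((TensorProduct.rid K L).toLinearMap ∘ₗ (ω.flip x).lTensor L) (hinvr y)
  simp only [map_sum, map_add, map_zero, LinearMap.comp_apply, LinearMap.lTensor_tmul,
    LinearMap.BilinForm.flip_apply, LinearEquiv.coe_coe, TensorProduct.rid_tmul, hinv,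
    Finset.sum_add_distrib] at h
  have hRx : ∑ i, ω (b i) x • ⁅a i, y⁆ = ⁅R x, y⁆ := by simp [hR, sum_lie, smul_lie]
  have hSx : ∑ i, ω (a i) x • ⁅b i, y⁆ = ⁅S x, y⁆ := by simp [hS, sum_lie, smul_lie]
  rw [hRx, hSx, ← hR, ← hS] at h
  rw [LinearMap.add_apply, LinearMap.add_apply, lie_add, ← neg_eq_iff_add_eq_zero.mpr h,
    ← lie_skew (R x), ← lie_skew (S x)]
  abel

variable [AddCommGroup M] [Module K M] [LieRingModule L M] [LieModule K L M]

theorem LieSubmodule.map_lie_top_le_of_commute {f : M →ₗ[K] M}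
    (hf : ∀ (x : L) (m : M), f ⁅x, m⁆ = ⁅x, f m⁆) (I : LieIdeal K L) :
    (⁅I, ⊤⁆ : LieSubmodule K L M).toSubmodule.map f ≤
      (⁅I, ⊤⁆ : LieSubmodule K L M).toSubmodule := by
  let g : M →ₗ⁅K, L⁆ M := { f with map_lie' := hf _ _ }
  rw [← LieSubmodule.toSubmodule_map g, LieSubmodule.map_bracket_eq,
    LieSubmodule.toSubmodule_le_toSubmodule]
  exact LieSubmodule.mono_lie_right I le_top

end Lie

theorem Submodule.apply_mem_map_of_add_add_smul_id {K M : Type*} [CommRing K] [AddCommGroup M]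
    [Module K M] {R S : M →ₗ[K] M} {c : K} {N : Submodule K M}
    (hN : N.map (R + S + c • LinearMap.id) ≤ N)
    (hR : ∀ x ∈ N.map (R + S + c • LinearMap.id),
      R x ∈ N.map (R + S + c • LinearMap.id)) :
    ∀ x ∈ N.map (R + S + c • LinearMap.id), S x ∈ N.map (R + S + c • LinearMap.id) := by
  intro x hx
  have hθx := Submodule.mem_map_of_mem (f := R + S + c • LinearMap.id) (hN hx)
  have hSx : S x = (R + S + c • LinearMap.id : M →ₗ[K] M) x - R x - c • x := by
    simp only [LinearMap.add_apply, LinearMap.smul_apply, LinearMap.id_apply]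
    abel
  rw [hSx]
  exact sub_mem (sub_mem hθx (hR x hx)) (Submodule.smul_mem _ c hx)

theorem stmt_8_general
    (F : Type*) [Field F]
    (L : Type*) [LieRing L] [LieAlgebra F L]
    (ω : LinearMap.BilinForm F L)
    (hnd : ω.Nondegenerate)
    (hsymm : ∀ x y : L, ω x y = ω y x)
    (hinv : ∀ x y z : L, ω ⁅x, y⁆ z = ω x ⁅y, z⁆)
    (ι : Type*) [Fintype ι] (a b : ι → L)
    (R Rstar : L →ₗ[F] L)
    (hR : ∀ x : L, R x = ∑ i, ω (b i) x • a i)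
    (hadj : ∀ x y : L, ω (R x) y = ω x (Rstar y))
    (hinvr : ∀ y : L, ∑ i, (⁅a i, y⁆ ⊗ₜ[F] b i + a i ⊗ₜ[F] ⁅b i, y⁆
        + ⁅b i, y⁆ ⊗ₜ[F] a i + b i ⊗ₜ[F] ⁅a i, y⁆) = (0 : L ⊗[F] L))
    (lam : F)
    (hRI : ∀ x ∈ Submodule.map (R + Rstar + lam • LinearMap.id)
        (⁅(⊤ : LieIdeal F L), (⊤ : LieIdeal F L)⁆ : LieIdeal F L).toSubmodule,
      R x ∈ Submodule.map (R + Rstar + lam • LinearMap.id)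
        (⁅(⊤ : LieIdeal F L), (⊤ : LieIdeal F L)⁆ : LieIdeal F L).toSubmodule) :
    ∀ x ∈ Submodule.map (R + Rstar + lam • LinearMap.id)
        (⁅(⊤ : LieIdeal F L), (⊤ : LieIdeal F L)⁆ : LieIdeal F L).toSubmodule,
      Rstar x ∈ Submodule.map (R + Rstar + lam • LinearMap.id)
        (⁅(⊤ : LieIdeal F L), (⊤ : LieIdeal F L)⁆ : LieIdeal F L).toSubmodule := by
  have hRstar := LinearMap.BilinForm.adjoint_apply_eq_sum hnd hsymm hR hadj
  have hθ (y x : L) : (R + Rstar + lam • LinearMap.id : L →ₗ[F] L) ⁅y, x⁆ =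
      ⁅y, (R + Rstar + lam • LinearMap.id : L →ₗ[F] L) x⁆ := by
    rw [LinearMap.add_apply, add_apply_lie_of_invariant hinv hR hRstar hinvr]
    simp only [LinearMap.add_apply, LinearMap.smul_apply, LinearMap.id_apply, lie_add, lie_smul]
  exact Submodule.apply_mem_map_of_add_add_smul_id
    (LieSubmodule.map_lie_top_le_of_commute hθ ⊤) hRI

theorem stmt_8
    (F : Type*) [Field F] [CharZero F]
    (L : Type*) [LieRing L] [LieAlgebra F L] [FiniteDimensional F L]
    (ω : LinearMap.BilinForm F L)
    (hnd : ω.Nondegenerate)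
    (hsymm : ∀ x y : L, ω x y = ω y x)
    (hinv : ∀ x y z : L, ω ⁅x, y⁆ z = ω x ⁅y, z⁆)
    (ι : Type*) [Fintype ι] (a b : ι → L)
    (R Rstar : L →ₗ[F] L)
    (hR : ∀ x : L, R x = ∑ i, ω (b i) x • a i)
    (hadj : ∀ x y : L, ω (R x) y = ω x (Rstar y))
    (hCYBE : ∑ i, ∑ j, (⁅a i, a j⁆ ⊗ₜ[F] (b i ⊗ₜ[F] b j)
        - a i ⊗ₜ[F] (⁅a j, b i⁆ ⊗ₜ[F] b j)
        + a i ⊗ₜ[F] (a j ⊗ₜ[F] ⁅b i, b j⁆)) = (0 : L ⊗[F] (L ⊗[F] L)))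
    (hinvr : ∀ y : L, ∑ i, (⁅a i, y⁆ ⊗ₜ[F] b i + a i ⊗ₜ[F] ⁅b i, y⁆
        + ⁅b i, y⁆ ⊗ₜ[F] a i + b i ⊗ₜ[F] ⁅a i, y⁆) = (0 : L ⊗[F] L))
    (lam : F)
    (hRI : ∀ x ∈ Submodule.map (R + Rstar + lam • LinearMap.id)
        (⁅(⊤ : LieIdeal F L), (⊤ : LieIdeal F L)⁆ : LieIdeal F L).toSubmodule,
      R x ∈ Submodule.map (R + Rstar + lam • LinearMap.id)
        (⁅(⊤ : LieIdeal F L), (⊤ : LieIdeal F L)⁆ : LieIdeal F L).toSubmodule) :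
    ∀ x ∈ Submodule.map (R + Rstar + lam • LinearMap.id)
        (⁅(⊤ : LieIdeal F L), (⊤ : LieIdeal F L)⁆ : LieIdeal F L).toSubmodule,
      Rstar x ∈ Submodule.map (R + Rstar + lam • LinearMap.id)
        (⁅(⊤ : LieIdeal F L), (⊤ : LieIdeal F L)⁆ : LieIdeal F L).toSubmodule :=
  stmt_8_general F L ω hnd hsymm hinv ι a b R Rstar hR hadj hinvr lam hRI
end
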